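/- For every real number x ≥ 1 there is a plan with x tankloads in the single-jeep model that reaches a state in which the jeep's position equals G(x) and subsequently reaches a state in which the jeep's position equals 0; that is, with x tankloads the jeep can make a round trip to distance G(x). -/

import Mathlib

/-- A state of the single-jeep model: the jeep's position, the fuel in its
tank, and a finitely supported function recording the fuel in depots. -/
structure JeepState where
  pos : ℝ
  tank : ℝ
  depot : ℝ →₀ ℝ

/-- Admissible moves of the single-jeep model: either drive (consuming one
tankload per unit of distance), or transfer fuel between the tank and the
depot at the jeep's current position. -/
inductive JeepStep : JeepState → JeepState → Prop
  | drive (s : JeepState) (p' : ℝ)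
      (h : 0 ≤ s.tank - |p' - s.pos|) :
      JeepStep s ⟨p', s.tank - |p' - s.pos|, s.depot⟩
  | transfer (s : JeepState) (t' : ℝ) (D' : ℝ →₀ ℝ)
      (hcons : t' + D' s.pos = s.tank + s.depot s.pos)
      (ht0 : 0 ≤ t') (ht1 : t' ≤ 1)
      (hD : ∀ q, 0 ≤ D' q)
      (heq : ∀ q, q ≠ s.pos → D' q = s.depot q) :
      JeepStep s ⟨s.pos, t', D'⟩

/-- The initial state of a plan with `x` tankloads: the jeep is at `0` with an
empty tank, and `x` tankloads of fuel are stored at position `0`. -/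
noncomputable def jeepInit (x : ℝ) : JeepState :=
  ⟨0, 0, Finsupp.single 0 x⟩

/-- `G x = Σ_{k=1}^{⌈x⌉−1} 1/(2k) + (x − ⌈x⌉ + 1)/(2⌈x⌉)`. -/
noncomputable def G (x : ℝ) : ℝ :=
  (∑ k ∈ Finset.Icc 1 (⌈x⌉₊ - 1), 1 / (2 * (k : ℝ))) +
    (x - ⌈x⌉₊ + 1) / (2 * (⌈x⌉₊ : ℝ))

/-!
Pass the fuel forward in stages. With `k` tankloads and a round trip of length `d` available from
any site, `k + 2(k+1)δ` tankloads at `p` (for `2(k+1)δ ≤ 1`) suffice for a round trip of length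
`d + δ`: ferry the `k` full tankloads to `p + δ`, each losing `2δ`, then drive the remaining
`2(k+1)δ` there one way. This leaves `k + δ` tankloads at `p + δ`: `k` for the round trip from
there and `δ` for the drive home. Starting from `k = 0` with `δ = 1/(2(k+1))` gives the harmonic
round trips `G k`, and a last stage with `δ = (y - k)/(2(k+1))` reaches `G y`.
-/

open Finsupp Relation

namespace JeepStep

variable {p t t' a d : ℝ} {D D' : ℝ →₀ ℝ}

/-- A transfer, with conservation of fuel stated as an identity of fuel distributions in which the
tank counts as fuel stored at the jeep's position. -/
theorem of_add_single_eq (hD' : 0 ≤ D') (ht' : 0 ≤ t') (ht'1 : t' ≤ 1)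
    (h : D + single p t = D' + single p t') : JeepStep ⟨p, t, D⟩ ⟨p, t', D'⟩ := by
  refine transfer ⟨p, t, D⟩ t' D' ?_ ht' ht'1 hD' fun q hq => ?_
  · have := DFunLike.congr_fun h p
    simp only [coe_add, Pi.add_apply, single_eq_same] at this
    linarith
  · simpa [single_eq_of_ne hq] using (DFunLike.congr_fun h q).symm

theorem load (hD : 0 ≤ D) (ht' : t' = t + a) (h0 : 0 ≤ t') (h1 : t' ≤ 1) :
    JeepStep ⟨p, t, D + single p a⟩ ⟨p, t', D⟩ :=
  of_add_single_eq hD h0 h1 <| by rw [ht', single_add, add_assoc, add_comm (single p t)]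

theorem unload (hD : 0 ≤ D) (ha : 0 ≤ a) (ht : t = t' + a) (h0 : 0 ≤ t') (h1 : t' ≤ 1) :
    JeepStep ⟨p, t, D⟩ ⟨p, t', D + single p a⟩ :=
  of_add_single_eq (add_nonneg hD (single_nonneg.2 ha)) h0 h1 <| by
    rw [ht, single_add, add_assoc, add_comm (single p t')]

theorem drive_forward (hd : 0 ≤ d) (ht : t = t' + d) (ht' : 0 ≤ t') :
    JeepStep ⟨p, t, D⟩ ⟨p + d, t', D⟩ := by
  have ht'_eq : t' = t - |p + d - p| := by rw [add_sub_cancel_left, abs_of_nonneg hd]; linarith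
  exact ht'_eq ▸ drive ⟨p, t, D⟩ (p + d) (ht'_eq ▸ ht')

theorem drive_back (hd : 0 ≤ d) (ht : t = t' + d) (ht' : 0 ≤ t') :
    JeepStep ⟨p + d, t, D⟩ ⟨p, t', D⟩ := by
  have ht'_eq : t' = t - |p - (p + d)| := by
    rw [sub_add_cancel_left, abs_neg, abs_of_nonneg hd]; linarith
  exact ht'_eq ▸ drive ⟨p + d, t, D⟩ p (ht'_eq ▸ ht')

end JeepStep

section Ferry

variable {p δ : ℝ} {D : ℝ →₀ ℝ}

theorem reflTransGen_ferry (hD : 0 ≤ D) (hδ : 0 ≤ δ) (hδ1 : 2 * δ ≤ 1) :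
    ReflTransGen JeepStep ⟨p, 0, D + single p 1⟩ ⟨p, 0, D + single (p + δ) (1 - 2 * δ)⟩ :=
  .head (JeepStep.load (t' := 1) hD (by ring) zero_le_one le_rfl) <|
  .head (JeepStep.drive_forward (t' := 1 - δ) hδ (by ring) (by linarith)) <|
  .head (JeepStep.unload (t' := δ) hD (by linarith) (by ring) hδ (by linarith)) <|
  .single (JeepStep.drive_back hδ (by ring) le_rfl)

theorem reflTransGen_ferry_natCast (hD : 0 ≤ D) (hδ : 0 ≤ δ) (hδ1 : 2 * δ ≤ 1) (k : ℕ) :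
    ReflTransGen JeepStep ⟨p, 0, D + single p (k : ℝ)⟩
      ⟨p, 0, D + single (p + δ) (k * (1 - 2 * δ))⟩ := by
  induction k generalizing D with
  | zero => simpa using ReflTransGen.refl
  | succ k ih =>
    have hD' : 0 ≤ D + single (p + δ) (1 - 2 * δ) :=
      add_nonneg hD (single_nonneg.2 (by linarith))
    have hsplit : D + single p ((k + 1 : ℕ) : ℝ) = D + single p (k : ℝ) + single p 1 := by
      rw [Nat.cast_succ, single_add, add_assoc]
    have hswap : D + single p (k : ℝ) + single (p + δ) (1 - 2 * δ)
        = D + single (p + δ) (1 - 2 * δ) + single p (k : ℝ) := add_right_comm _ _ _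
    have hmerge : D + single (p + δ) (1 - 2 * δ) + single (p + δ) (k * (1 - 2 * δ))
        = D + single (p + δ) (((k + 1 : ℕ) : ℝ) * (1 - 2 * δ)) := by
      rw [add_assoc, ← single_add]; push_cast; ring_nf
    rw [hsplit, ← hmerge]
    exact (reflTransGen_ferry (add_nonneg hD (single_nonneg.2 k.cast_nonneg)) hδ hδ1).trans
      (hswap ▸ ih hD')

end Ferry

/-- The other depots `E` are arbitrary and come back untouched, which lets round trips be nested. -/
def CanRoundTrip (y d : ℝ) : Prop :=
  ∀ (p : ℝ) (E : ℝ →₀ ℝ), 0 ≤ E → ∃ s : JeepState,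
    ReflTransGen JeepStep ⟨p, 0, E + single p y⟩ s ∧ s.pos = p + d ∧
      ReflTransGen JeepStep s ⟨p, 0, E⟩

theorem canRoundTrip_zero : CanRoundTrip 0 0 :=
  fun p E _ => ⟨⟨p, 0, E⟩, by simpa using ReflTransGen.refl, (add_zero p).symm, .refl⟩

theorem CanRoundTrip.advance {k : ℕ} {d δ : ℝ} (h : CanRoundTrip k d) (hδ : 0 ≤ δ)
    (hδk : 2 * (k + 1) * δ ≤ 1) : CanRoundTrip (k + 2 * (k + 1) * δ) (d + δ) := by
  intro p E hE
  have hk : (0 : ℝ) ≤ k := k.cast_nonneg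
  have hc : 0 ≤ (k : ℝ) * (1 - 2 * δ) := mul_nonneg hk (by nlinarith)
  have hEc : 0 ≤ E + single (p + δ) (k * (1 - 2 * δ)) := add_nonneg hE (single_nonneg.2 hc)
  have hEδ : 0 ≤ E + single (p + δ) δ := add_nonneg hE (single_nonneg.2 hδ)
  have ferried : ReflTransGen JeepStep ⟨p, 0, E + single p (k + 2 * (k + 1) * δ)⟩
      ⟨p, 0, E + single (p + δ) (k * (1 - 2 * δ)) + single p (2 * (k + 1) * δ)⟩ := by
    have hsplit : E + single p (k + 2 * (k + 1) * δ)
        = E + single p (2 * (k + 1) * δ) + single p (k : ℝ) := by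
      rw [add_comm (k : ℝ), single_add, add_assoc]
    rw [hsplit, add_right_comm (E : ℝ →₀ ℝ) (single (p + δ) _)]
    exact reflTransGen_ferry_natCast (add_nonneg hE (single_nonneg.2 (by positivity))) hδ
      (by nlinarith) k
  -- the remaining `2(k+1)δ` tankloads drive one way to `p + δ` and join the ferried fuel there
  have hstage : E + single (p + δ) (k * (1 - 2 * δ)) + single (p + δ) ((2 * k + 1) * δ)
      = E + single (p + δ) δ + single (p + δ) (k : ℝ) := by
    rw [add_assoc, add_assoc, ← single_add, ← single_add]; ring_nf
  obtain ⟨s, hout, hpos, hback⟩ := h (p + δ) (E + single (p + δ) δ) hEδ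
  refine ⟨s, ferried.trans ?_, by rw [hpos]; ring, hback.trans ?_⟩
  · refine .head (JeepStep.load hEc rfl (by positivity) (by simpa using hδk)) <| .head
      (JeepStep.drive_forward (t' := (2 * k + 1) * δ) hδ (by ring) (by positivity)) ?_
    exact .head (JeepStep.unload hEc (by positivity) (by ring) le_rfl zero_le_one) (hstage ▸ hout)
  · exact .head (JeepStep.load (t' := δ) hE (by ring) hδ (by nlinarith)) <|
      .single (JeepStep.drive_back hδ (by ring) le_rfl)

theorem canRoundTrip_natCast (k : ℕ) :
    CanRoundTrip k (∑ j ∈ Finset.Icc 1 k, 1 / (2 * (j : ℝ))) := by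
  induction k with
  | zero => simpa using canRoundTrip_zero
  | succ k ih =>
    convert ih.advance (δ := 1 / (2 * (k + 1))) (by positivity) (le_of_eq (by field_simp)) using 1
    · push_cast; field_simp
    · rw [Finset.sum_Icc_succ_top (by omega)]; push_cast; ring

theorem G_eq_of_lt_of_le {y : ℝ} {k : ℕ} (hky : k < y) (hyk : y ≤ k + 1) :
    G y = ∑ j ∈ Finset.Icc 1 k, 1 / (2 * (j : ℝ)) + (y - k) / (2 * (k + 1)) := by
  have hceil : ⌈y⌉₊ = k + 1 :=
    (Nat.ceil_eq_iff k.succ_ne_zero).2 ⟨by simpa using hky, by simpa using hyk⟩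
  simp only [G, hceil, Nat.add_sub_cancel, Nat.cast_succ]
  ring

theorem canRoundTrip_G {y : ℝ} (hy : 0 < y) : CanRoundTrip y (G y) := by
  obtain ⟨k, hk⟩ : ∃ k : ℕ, ⌈y⌉₊ = k + 1 :=
    ⟨⌈y⌉₊ - 1, by have := Nat.ceil_pos.2 hy; omega⟩
  obtain ⟨hky, hyk⟩ := (Nat.ceil_eq_iff k.succ_ne_zero).1 hk
  push_cast at hky hyk
  convert (canRoundTrip_natCast k).advance (δ := (y - k) / (2 * (k + 1)))
    (div_nonneg (by linarith) (by positivity)) ?_ using 1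
  · field_simp; ring
  · exact G_eq_of_lt_of_le hky hyk
  · rw [mul_div_cancel₀ _ (by positivity)]; linarith

/-- For every `x ≥ 1` there is a plan with `x` tankloads that reaches a state
with jeep position `G x` and subsequently reaches a state with jeep
position `0`: the jeep can make a round trip to distance `G x`. -/
theorem jeep_roundtrip_reachable (x : ℝ) (hx : 1 ≤ x) :
    ∃ s₁ s₂ : JeepState,
      Relation.ReflTransGen JeepStep (jeepInit x) s₁ ∧
      Relation.ReflTransGen JeepStep s₁ s₂ ∧
      s₁.pos = G x ∧ s₂.pos = 0 := by
  obtain ⟨s, hout, hpos, hback⟩ := canRoundTrip_G (by linarith) 0 0 le_rfl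
  refine ⟨s, ⟨0, 0, 0⟩, by simpa [jeepInit] using hout, hback, by simpa using hpos, rfl⟩
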